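/- Let m_0, …, m_{n-1} be natural numbers. For every P ∈ MvPolynomial (Fin n) 𝔽_p with aeval(h) P = ∏_{i=0}^{n-1} d_{n,i}^{m_i} (where aeval(h) substitutes h_1, …, h_n for the n variables), the coefficient in P of the monomial whose exponent vector is (m_0, m_0+m_1, …, m_0+⋯+m_{n-1}) — i.e. whose t-th coordinate equals m_0 + ⋯ + m_{t-1} for 1 ≤ t ≤ n — is equal to 1. -/

import Mathlib

/-!
Write `h_{k+1} = f_k(y_{k+1})^{p-1}`. The polynomial `f_k^p - h_{k+1} f_k` is monic of degree
`p^{k+1}` and vanishes on `V_{k+1} = 𝔽_p y_{k+1} + V_k`, because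
`f_k(λ y_{k+1} + w) = λ f_k(y_{k+1})` for `w ∈ V_k`; so it is `f_{k+1}`. Comparing coefficients
gives `d_{k+1,0} = h_{k+1} d_{k,0}` and `d_{k+1,i+1} = h_{k+1} d_{k,i+1} + d_{k,i}^p`, so `d_{n,i}`
is the value at the `h`'s of the polynomial `D_{n,i}` defined by the same recursion in the
variables.

Order monomials colexicographically, so that later variables dominate. The leading monomial of
`D_{k,i}` is `X_i ⋯ X_{k-1}` with coefficient `1`: in `X_k D_{k,i+1} + D_{k,i}^p` the second term
does not involve `X_k`. In the same order `h_{j+1}` has leading monomial `y_{j+1}^{(p-1)p^j}`, so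
distinct monomials in the `h`'s have distinct leading monomials and the `h`'s are algebraically
independent. Hence `P = ∏ D_{n,i}^{m_i}`, whose leading monomial `∏_i (X_i ⋯ X_{n-1})^{m_i}`
has exponent vector the partial sums of `m`, and coefficient `1`.
-/

open MvPolynomial

/-- `V p n k` : the set of `𝔽_p`-linear combinations of the first `k` variables. -/
noncomputable def V (p n k : ℕ) [Fact p.Prime] : Finset (MvPolynomial (Fin n) (ZMod p)) :=
  (Finset.univ : Finset (Fin n → ZMod p)).image
    (fun c => ∑ j ∈ Finset.univ.filter (fun j : Fin n => j.val < k), C (c j) * X j)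

/-- `f p n k = ∏_{u ∈ V_k} (X - C u)`. -/
noncomputable def f (p n k : ℕ) [Fact p.Prime] :
    Polynomial (MvPolynomial (Fin n) (ZMod p)) :=
  ∏ u ∈ V p n k, (Polynomial.X - Polynomial.C u)

/-- Dickson invariant `d_{k,i}`. -/
noncomputable def d (p n k i : ℕ) [Fact p.Prime] : MvPolynomial (Fin n) (ZMod p) :=
  (-1) ^ (k - i) * (f p n k).coeff (p ^ i)

/-- Borel generator: `hGen p n j` is `h_{j+1}` of the paper. -/
noncomputable def hGen (p n : ℕ) [Fact p.Prime] (j : Fin n) : MvPolynomial (Fin n) (ZMod p) :=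
  (Polynomial.eval (X j) (f p n j.val)) ^ (p - 1)

/-- Action of `GL_n(𝔽_p)` on `S` by linear substitution `g · y_j = ∑_i g_{ij} y_i`. -/
noncomputable def gact (p n : ℕ) [Fact p.Prime] (g : GL (Fin n) (ZMod p)) :
    MvPolynomial (Fin n) (ZMod p) →ₐ[ZMod p] MvPolynomial (Fin n) (ZMod p) :=
  aeval (fun j : Fin n => ∑ i : Fin n, C ((g : Matrix (Fin n) (Fin n) (ZMod p)) i j) * X i)

open scoped MonomialOrder

theorem Polynomial.Monic.eq_prod_X_sub_C_of_natDegree_le_card {R : Type*} [CommRing R] [IsDomain R]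
    {g : Polynomial R} (hg : g.Monic) {s : Finset R} (hdeg : g.natDegree ≤ s.card)
    (hroot : ∀ a ∈ s, g.eval a = 0) :
    g = ∏ a ∈ s, (Polynomial.X - Polynomial.C a) := by
  have hroots := Polynomial.roots_eq_of_natDegree_le_card_of_ne_zero hroot hdeg hg.ne_zero
  have hcard : g.roots.card = g.natDegree :=
    le_antisymm (Polynomial.card_roots' g) (by rwa [hroots])
  rw [← Polynomial.prod_multiset_X_sub_C_of_monic_of_roots_card_eq hg hcard, hroots,
    Finset.prod_eq_multiset_prod]

theorem Polynomial.coeff_pow_expChar {R : Type*} [CommSemiring R] (p : ℕ) [ExpChar R p]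
    (F : Polynomial R) (j : ℕ) :
    (F ^ p).coeff j = if p ∣ j then F.coeff (j / p) ^ p else 0 := by
  rw [← Polynomial.map_frobenius_expand, Polynomial.coeff_map,
    Polynomial.coeff_expand (expChar_pos R p)]
  split_ifs
  · rw [frobenius_def]
  · exact map_zero _

noncomputable def MonomialOrder.colex {σ : Type*} [LinearOrder σ] [WellFoundedLT σ] :
    MonomialOrder σ where
  syn := Colex (σ →₀ ℕ)
  toSyn := { toEquiv := toColex, map_add' := fun _ _ => rfl }
  toSyn_monotone := Finsupp.toColex_monotone

theorem MonomialOrder.colex_lt_of {σ : Type*} [LinearOrder σ] [WellFoundedLT σ]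
    {c d : σ →₀ ℕ} (i : σ) (hagree : ∀ j, i < j → c j = d j) (hlt : c i < d i) :
    c ≺[colex] d :=
  Finsupp.Colex.lt_iff.2 ⟨i, hagree, hlt⟩

open MonomialOrder (colex)

theorem MonomialOrder.Monic.degree_mul {σ R : Type*} [CommSemiring R] [Nontrivial R]
    {m : MonomialOrder σ} {f g : MvPolynomial σ R} (hf : m.Monic f) (hg : m.Monic g) :
    m.degree (f * g) = m.degree f + m.degree g :=
  m.degree_mul_of_isRegular_left (by rw [hf.leadingCoeff_eq_one]; exact isRegular_one) hg.ne_zero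

theorem MonomialOrder.Monic.degree_pow {σ R : Type*} [CommSemiring R] [Nontrivial R]
    {m : MonomialOrder σ} {f : MvPolynomial σ R} (hf : m.Monic f) (q : ℕ) :
    m.degree (f ^ q) = q • m.degree f :=
  m.degree_pow_of_pow_leadingCoeff_ne_zero (by simp [hf.leadingCoeff_eq_one])

theorem MonomialOrder.degree_prod_of_monic {σ R ι : Type*} [CommSemiring R] {m : MonomialOrder σ}
    {s : Finset ι} {P : ι → MvPolynomial σ R} (h : ∀ i ∈ s, m.Monic (P i)) :
    m.degree (∏ i ∈ s, P i) = ∑ i ∈ s, m.degree (P i) :=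
  m.degree_prod_of_regular fun i hi => by rw [(h i hi).leadingCoeff_eq_one]; exact isRegular_one

theorem MonomialOrder.injective_aeval_of_monic {σ τ R : Type*} [CommRing R] [Nontrivial R]
    (m : MonomialOrder σ) {g : τ → MvPolynomial σ R} (hg : ∀ j, m.Monic (g j))
    (hinj : Function.Injective (Finsupp.weight (R := ℕ) fun j => m.degree (g j))) :
    Function.Injective (aeval (R := R) g) := by
  set w := Finsupp.weight (R := ℕ) fun j => m.degree (g j)
  have hmon : ∀ a : τ →₀ ℕ, m.Monic (a.prod fun j e => g j ^ e) :=
    fun a => Monic.prod fun j _ => (hg j).pow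
  have hdeg : ∀ a : τ →₀ ℕ, m.degree (a.prod fun j e => g j ^ e) = w a := fun a => by
    rw [Finsupp.prod, degree_prod_of_monic fun j _ => (hg j).pow, Finsupp.weight_apply,
      Finsupp.sum]
    exact Finset.sum_congr rfl fun j _ => (hg j).degree_pow _
  rw [injective_iff_map_eq_zero]
  intro P hP
  by_contra hne
  obtain ⟨a₀, ha₀, hmax⟩ :=
    P.support.exists_max_image (m.toSyn ∘ w) (support_nonempty.2 hne)
  have hcoeff : coeff (w a₀) (aeval g P) = coeff a₀ P := by
    conv_lhs => rw [P.as_sum]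
    simp only [map_sum, aeval_monomial, algebraMap_eq, coeff_sum, coeff_C_mul]
    rw [Finset.sum_eq_single_of_mem a₀ ha₀, ← hdeg, (hmon a₀).coeff_degree, mul_one]
    intro a ha ha₀'
    rw [m.coeff_eq_zero_of_lt (by
      rw [hdeg]; exact lt_of_le_of_ne (hmax a ha) fun h => ha₀' (hinj (m.toSyn.injective h))),
      mul_zero]
  exact mem_support_iff.1 ha₀ (by rw [← hcoeff, hP, coeff_zero])

theorem Finsupp.weight_single_apply {σ : Type*} (c : σ → ℕ) (a : σ →₀ ℕ) (j : σ) :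
    Finsupp.weight (R := ℕ) (fun j => Finsupp.single j (c j)) a j = a j * c j := by
  classical
  rw [Finsupp.weight_apply, Finsupp.sum_apply]
  simp only [Finsupp.smul_single, smul_eq_mul, Finsupp.single_apply]
  rw [Finsupp.sum_ite_eq']
  split_ifs with hj
  · rfl
  · rw [Finsupp.notMem_support_iff.1 hj, zero_mul]

theorem Finsupp.weight_single_injective {σ : Type*} {c : σ → ℕ} (hc : ∀ j, c j ≠ 0) :
    Function.Injective (Finsupp.weight (R := ℕ) fun j => Finsupp.single j (c j)) := by
  intro a b h
  ext j
  have := DFunLike.congr_fun h j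
  rw [Finsupp.weight_single_apply, Finsupp.weight_single_apply] at this
  exact Nat.eq_of_mul_eq_mul_right (Nat.pos_of_ne_zero (hc j)) this

section DicksonRecursion

variable {A : Type*} [CommSemiring A] (q : ℕ)

-- With `x k` standing for `h_{k+1}`, this is the recursion satisfied by `d_{k,i}` (`d_succ_succ`).
def dicksonRec (x : ℕ → A) : ℕ → ℕ → A
  | 0, 0 => 1
  | 0, _ + 1 => 0
  | k + 1, 0 => x k * dicksonRec x k 0
  | k + 1, i + 1 => x k * dicksonRec x k (i + 1) + dicksonRec x k i ^ q

theorem map_dicksonRec {B F : Type*} [CommSemiring B] [FunLike F A B] [RingHomClass F A B]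
    (φ : F) (x : ℕ → A) :
    ∀ k i, φ (dicksonRec q x k i) = dicksonRec q (φ ∘ x) k i
  | 0, 0 => by simp [dicksonRec]
  | 0, _ + 1 => by simp [dicksonRec]
  | k + 1, 0 => by simp [dicksonRec, map_dicksonRec φ x k 0]
  | k + 1, i + 1 => by simp [dicksonRec, map_dicksonRec φ x k]

theorem dicksonRec_eq_zero_of_lt (hq : q ≠ 0) (x : ℕ → A) :
    ∀ {k i}, k < i → dicksonRec q x k i = 0
  | 0, _ + 1, _ => rfl
  | k + 1, i + 1, h => by
    rw [dicksonRec, dicksonRec_eq_zero_of_lt hq x (by omega : k < i + 1),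
      dicksonRec_eq_zero_of_lt hq x (by omega : k < i), zero_pow hq, mul_zero, add_zero]

theorem dicksonRec_self (hq : q ≠ 0) (x : ℕ → A) : ∀ k, dicksonRec q x k k = 1
  | 0 => rfl
  | k + 1 => by
    rw [dicksonRec, dicksonRec_eq_zero_of_lt q hq x (Nat.lt_succ_self k), dicksonRec_self hq x k,
      one_pow, mul_zero, zero_add]

end DicksonRecursion

section LeadingMonomial

variable {R : Type*} [CommSemiring R] (n : ℕ)

noncomputable def varOrZero (k : ℕ) : MvPolynomial (Fin n) R :=
  if h : k < n then X ⟨k, h⟩ else 0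

noncomputable def dicksonExponent (k i : ℕ) : Fin n →₀ ℕ :=
  Finsupp.equivFunOnFinite.symm fun j => if i ≤ j.val ∧ j.val < k then 1 else 0

theorem dicksonExponent_apply (k i : ℕ) (j : Fin n) :
    dicksonExponent n k i j = if i ≤ j.val ∧ j.val < k then 1 else 0 := rfl

theorem dicksonExponent_self (k : ℕ) : dicksonExponent n k k = 0 := by
  ext j; simp [dicksonExponent_apply]

theorem single_add_dicksonExponent {k i : ℕ} (hk : k < n) (hi : i ≤ k) :
    Finsupp.single ⟨k, hk⟩ 1 + dicksonExponent n k i = dicksonExponent n (k + 1) i := by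
  ext j
  simp only [Finsupp.add_apply, Finsupp.single_apply, dicksonExponent_apply, Fin.ext_iff]
  split_ifs <;> omega

theorem smul_dicksonExponent_lt {k i : ℕ} (hk : k < n) (hi : i < k) (q : ℕ) :
    q • dicksonExponent n k i ≺[colex] dicksonExponent n (k + 1) (i + 1) := by
  refine MonomialOrder.colex_lt_of ⟨k, hk⟩ (fun j hj => ?_) ?_
  · have : k < j.val := hj
    simp only [Finsupp.smul_apply, dicksonExponent_apply, smul_eq_mul]
    split_ifs <;> omega
  · simp only [Finsupp.smul_apply, dicksonExponent_apply, smul_eq_mul]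
    split_ifs <;> omega

theorem sum_smul_dicksonExponent (m : Fin n → ℕ) :
    ∑ i : Fin n, m i • dicksonExponent n n i =
      Finsupp.equivFunOnFinite.symm (fun j : Fin n => ∑ i ∈ Finset.Iic j, m i) := by
  ext j
  simp only [Finsupp.finsetSum_apply, Finsupp.smul_apply, dicksonExponent_apply, smul_eq_mul,
    Finsupp.coe_equivFunOnFinite_symm, j.isLt, and_true, mul_ite, mul_one, mul_zero]
  rw [← Finset.sum_filter]
  congr 1
  ext i
  simp only [Finset.mem_filter, Finset.mem_univ, true_and, Finset.mem_Iic, Fin.le_def]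

theorem colex_monic_and_degree_dicksonRec [Nontrivial R] {q : ℕ} (hq : q ≠ 0) :
    ∀ {k}, k ≤ n → ∀ {i}, i ≤ k →
      colex.Monic (dicksonRec q (varOrZero (R := R) n) k i) ∧
      colex.degree (dicksonRec q (varOrZero (R := R) n) k i) = dicksonExponent n k i
  | 0, _, 0, _ => by simp [dicksonRec, dicksonExponent_self, MonomialOrder.monic_one]
  | k + 1, (hk : k < n), 0, _ => by
    obtain ⟨hmon, hdeg⟩ := colex_monic_and_degree_dicksonRec hq hk.le k.zero_le
    have hX : colex.Monic (X (R := R) (⟨k, hk⟩ : Fin n)) :=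
      MonomialOrder.monic_X
    rw [dicksonRec, varOrZero, dif_pos hk]
    refine ⟨hX.mul hmon, ?_⟩
    rw [hX.degree_mul hmon, hdeg, MonomialOrder.degree_X,
      single_add_dicksonExponent n hk k.zero_le]
  | k + 1, (hk : k < n), i + 1, hi => by
    obtain rfl | hik := eq_or_lt_of_le (Nat.le_of_succ_le_succ hi)
    · simp [dicksonRec_self q hq, dicksonExponent_self, MonomialOrder.monic_one]
    obtain ⟨hmon, hdeg⟩ := colex_monic_and_degree_dicksonRec hq (k := k) hk.le (i := i + 1) hik
    obtain ⟨hmon', hdeg'⟩ := colex_monic_and_degree_dicksonRec hq (k := k) hk.le (i := i) hik.le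
    have hX : colex.Monic (X (R := R) (⟨k, hk⟩ : Fin n)) :=
      MonomialOrder.monic_X
    have hlead : colex.degree (X (R := R) ⟨k, hk⟩ * dicksonRec q (varOrZero n) k (i + 1)) =
        dicksonExponent n (k + 1) (i + 1) := by
      rw [hX.degree_mul hmon, hdeg, MonomialOrder.degree_X, single_add_dicksonExponent n hk hik]
    have hlt : colex.degree (dicksonRec q (varOrZero (R := R) n) k i ^ q) ≺[colex]
        colex.degree (X (R := R) ⟨k, hk⟩ * dicksonRec q (varOrZero n) k (i + 1)) := by
      rw [hmon'.degree_pow, hdeg', hlead]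
      exact smul_dicksonExponent_lt n hk hik q
    rw [dicksonRec, varOrZero, dif_pos hk]
    exact ⟨(hX.mul hmon).add_of_lt hlt, by rw [MonomialOrder.degree_add_of_lt hlt, hlead]⟩

end LeadingMonomial

section Subspaces

variable (p n : ℕ) [Fact p.Prime]

noncomputable def linComb (k : ℕ) :
    (Fin n → ZMod p) →ₗ[ZMod p] MvPolynomial (Fin n) (ZMod p) where
  toFun c := ∑ j ∈ Finset.univ.filter (fun j : Fin n => j.val < k), C (c j) * X j
  map_add' c c' := by simp only [Pi.add_apply, map_add, add_mul, Finset.sum_add_distrib]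
  map_smul' a c := by simp [Finset.mul_sum, smul_eq_C_mul, mul_assoc]

theorem linComb_apply (k : ℕ) (c : Fin n → ZMod p) :
    linComb p n k c = ∑ j ∈ Finset.univ.filter (fun j : Fin n => j.val < k), C (c j) * X j :=
  rfl

variable {p n} {k : ℕ} {u w : MvPolynomial (Fin n) (ZMod p)}

theorem mem_V : u ∈ V p n k ↔ ∃ c, linComb p n k c = u := by
  simp [V, linComb]

theorem zero_mem_V : (0 : MvPolynomial (Fin n) (ZMod p)) ∈ V p n k :=
  mem_V.2 ⟨0, map_zero _⟩

theorem add_mem_V (hu : u ∈ V p n k) (hw : w ∈ V p n k) : u + w ∈ V p n k := by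
  obtain ⟨c, rfl⟩ := mem_V.1 hu
  obtain ⟨c', rfl⟩ := mem_V.1 hw
  exact mem_V.2 ⟨c + c', map_add _ _ _⟩

theorem sub_mem_V (hu : u ∈ V p n k) (hw : w ∈ V p n k) : u - w ∈ V p n k := by
  obtain ⟨c, rfl⟩ := mem_V.1 hu
  obtain ⟨c', rfl⟩ := mem_V.1 hw
  exact mem_V.2 ⟨c - c', map_sub _ _ _⟩

theorem C_mul_mem_V (a : ZMod p) (hu : u ∈ V p n k) : C a * u ∈ V p n k := by
  obtain ⟨c, rfl⟩ := mem_V.1 hu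
  exact mem_V.2 ⟨a • c, by rw [map_smul, smul_eq_C_mul]⟩

theorem coeff_single_linComb (c : Fin n → ZMod p) (j : Fin n) :
    coeff (Finsupp.single j 1) (linComb p n k c) = if j.val < k then c j else 0 := by
  simp [linComb_apply, coeff_sum, coeff_X, Finsupp.single_left_inj]

theorem card_V (hk : k ≤ n) : (V p n k).card = p ^ k := by
  let extend : (Fin k → ZMod p) → Fin n → ZMod p :=
    fun b j => if h : j.val < k then b ⟨j, h⟩ else 0
  have hV : V p n k = Finset.univ.image (linComb p n k ∘ extend) := by
    ext u
    simp only [mem_V, Finset.mem_image, Finset.mem_univ, true_and, Function.comp_apply]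
    refine ⟨fun ⟨c, hc⟩ => ⟨fun t => c (Fin.castLE hk t), hc ▸ ?_⟩,
      fun ⟨b, hb⟩ => ⟨_, hb⟩⟩
    simp only [linComb_apply]
    refine Finset.sum_congr rfl fun j hj => ?_
    simp only [Finset.mem_filter] at hj
    simp [extend, hj.2]
  have hinj : Function.Injective (linComb p n k ∘ extend) := by
    intro b b' h
    funext t
    simpa [coeff_single_linComb, extend] using
      congr_arg (coeff (Finsupp.single (Fin.castLE hk t) 1)) h
  rw [hV, Finset.card_image_of_injective _ hinj, Finset.card_univ, Fintype.card_fun, ZMod.card,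
    Fintype.card_fin]

theorem exists_eq_C_mul_X_add_of_mem_V_succ (hk : k < n) {v : MvPolynomial (Fin n) (ZMod p)}
    (hv : v ∈ V p n (k + 1)) :
    ∃ (a : ZMod p) (w : MvPolynomial (Fin n) (ZMod p)),
      w ∈ V p n k ∧ v = C a * X ⟨k, hk⟩ + w := by
  obtain ⟨c, rfl⟩ := mem_V.1 hv
  refine ⟨c ⟨k, hk⟩, linComb p n k c, mem_V.2 ⟨c, rfl⟩, ?_⟩
  have hfilter : Finset.univ.filter (fun j : Fin n => j.val < k + 1) =
      insert ⟨k, hk⟩ (Finset.univ.filter fun j : Fin n => j.val < k) := by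
    ext j
    simp only [Order.lt_add_one_iff, Finset.mem_filter, Finset.mem_univ, true_and,
      Finset.mem_insert, Fin.ext_iff]
    omega
  simp only [linComb_apply, hfilter]
  rw [Finset.sum_insert (by simp)]

end Subspaces

section Annihilators

variable {p n : ℕ} [Fact p.Prime] {k : ℕ}

theorem monic_f : (f p n k).Monic :=
  Polynomial.monic_prod_of_monic _ _ fun u _ => Polynomial.monic_X_sub_C u

theorem natDegree_f (hk : k ≤ n) : (f p n k).natDegree = p ^ k := by
  rw [f, Polynomial.natDegree_prod_of_monic _ _ fun u _ => Polynomial.monic_X_sub_C u]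
  simp [card_V hk]

theorem eval_f (v : MvPolynomial (Fin n) (ZMod p)) :
    (f p n k).eval v = ∏ u ∈ V p n k, (v - u) := by
  simp [f, Polynomial.eval_prod]

theorem eval_f_add_of_mem_V {w : MvPolynomial (Fin n) (ZMod p)} (hw : w ∈ V p n k)
    (v : MvPolynomial (Fin n) (ZMod p)) :
    (f p n k).eval (v + w) = (f p n k).eval v := by
  rw [eval_f, eval_f]
  exact Finset.prod_nbij' (· - w) (· + w) (fun u hu => sub_mem_V hu hw)
    (fun u hu => add_mem_V hu hw) (fun _ _ => by ring) (fun _ _ => by ring) (fun _ _ => by ring)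

theorem eval_f_C_mul (hk : k ≤ n) (a : ZMod p) (v : MvPolynomial (Fin n) (ZMod p)) :
    (f p n k).eval (C a * v) = C a * (f p n k).eval v := by
  rcases eq_or_ne a 0 with rfl | ha
  · simpa [eval_f] using Finset.prod_eq_zero zero_mem_V (sub_zero _)
  have hscale : ∏ u ∈ V p n k, (C a * v - u) = ∏ u ∈ V p n k, (C a * v - C a * u) :=
    Finset.prod_nbij' (C a⁻¹ * ·) (C a * ·) (fun u hu => C_mul_mem_V _ hu)
      (fun u hu => C_mul_mem_V _ hu)
      (fun u _ => by rw [← mul_assoc, ← map_mul, mul_inv_cancel₀ ha, map_one, one_mul])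
      (fun u _ => by rw [← mul_assoc, ← map_mul, inv_mul_cancel₀ ha, map_one, one_mul])
      (fun u _ => by rw [← mul_assoc, ← map_mul, mul_inv_cancel₀ ha, map_one, one_mul])
  rw [eval_f, eval_f, hscale]
  simp_rw [← mul_sub]
  rw [Finset.prod_mul_distrib, Finset.prod_const, card_V hk, ← map_pow, ZMod.pow_card_pow]

theorem f_succ (hk : k < n) :
    f p n (k + 1) = f p n k ^ p - Polynomial.C (hGen p n ⟨k, hk⟩) * f p n k := by
  have hdeg :
      (Polynomial.C (hGen p n ⟨k, hk⟩) * f p n k).natDegree < (f p n k ^ p).natDegree := by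
    rw [Polynomial.natDegree_pow, natDegree_f hk.le, ← pow_succ']
    exact (Polynomial.natDegree_C_mul_le _ _).trans_lt
      ((natDegree_f hk.le).trans_lt
        (Nat.pow_lt_pow_right (Fact.out : p.Prime).one_lt k.lt_succ_self))
  have hmonic : (f p n k ^ p - Polynomial.C (hGen p n ⟨k, hk⟩) * f p n k).Monic :=
    (monic_f.pow p).sub_of_left (Polynomial.degree_lt_degree hdeg)
  refine (hmonic.eq_prod_X_sub_C_of_natDegree_le_card ?_ fun v hv => ?_).symm
  · rw [Polynomial.natDegree_sub_eq_left_of_natDegree_lt hdeg, Polynomial.natDegree_pow,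
      natDegree_f hk.le, card_V hk, pow_succ']
  obtain ⟨a, w, hw, rfl⟩ := exists_eq_C_mul_X_add_of_mem_V_succ hk hv
  set H := (f p n k).eval (X ⟨k, hk⟩)
  have hp : p - 1 + 1 = p := Nat.sub_add_cancel (Fact.out : p.Prime).one_lt.le
  rw [Polynomial.eval_sub, Polynomial.eval_mul, Polynomial.eval_pow, Polynomial.eval_C,
    eval_f_add_of_mem_V hw, eval_f_C_mul hk.le, hGen, mul_pow, ← map_pow, ZMod.pow_card]
  change C a * H ^ p - H ^ (p - 1) * (C a * H) = 0
  rw [mul_left_comm, ← pow_succ, hp, sub_self]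

end Annihilators

section DicksonInvariants

variable {p n : ℕ} [Fact p.Prime] {k : ℕ}

theorem d_self (hk : k ≤ n) : d p n k k = 1 := by
  rw [d, Nat.sub_self, pow_zero, one_mul, ← natDegree_f hk, monic_f.coeff_natDegree]

theorem d_eq_zero_of_lt (hk : k ≤ n) {i : ℕ} (hki : k < i) : d p n k i = 0 := by
  rw [d, Polynomial.coeff_eq_zero_of_natDegree_lt, mul_zero]
  rw [natDegree_f hk]
  exact Nat.pow_lt_pow_right (Fact.out : p.Prime).one_lt hki

theorem d_succ_zero (hk : k < n) : d p n (k + 1) 0 = hGen p n ⟨k, hk⟩ * d p n k 0 := by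
  rw [d, d, f_succ hk, Polynomial.coeff_sub, Polynomial.coeff_C_mul,
    Polynomial.coeff_pow_expChar, pow_zero,
    if_neg (Nat.not_dvd_of_pos_of_lt one_pos (Fact.out : p.Prime).one_lt), Nat.sub_zero,
    Nat.sub_zero, pow_succ]
  ring

theorem d_succ_succ (hk : k < n) (i : ℕ) :
    d p n (k + 1) (i + 1) = hGen p n ⟨k, hk⟩ * d p n k (i + 1) + d p n k i ^ p := by
  have hp : p ^ (i + 1) / p = p ^ i := by
    rw [pow_succ', Nat.mul_div_cancel_left _ (Fact.out : p.Prime).pos]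
  have hsign : ((-1 : MvPolynomial (Fin n) (ZMod p)) ^ (k - i)) ^ p = (-1) ^ (k - i) := by
    rw [← pow_mul, mul_comm, pow_mul, neg_one_pow_char]
  rw [d, d, d, f_succ hk, Polynomial.coeff_sub, Polynomial.coeff_C_mul,
    Polynomial.coeff_pow_expChar, if_pos (dvd_pow_self p i.succ_ne_zero), hp, mul_pow, hsign,
    Nat.add_sub_add_right]
  rcases lt_or_ge i k with hik | hik
  · obtain ⟨j, rfl⟩ := Nat.exists_eq_add_of_lt hik
    rw [show i + j + 1 - i = j + 1 by omega, show i + j + 1 - (i + 1) = j by omega, pow_succ]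
    ring
  · rw [Polynomial.coeff_eq_zero_of_natDegree_lt (p := f p n k) (n := p ^ (i + 1))
      (by rw [natDegree_f hk.le]
          exact Nat.pow_lt_pow_right (Fact.out : p.Prime).one_lt (by omega))]
    ring

theorem d_eq_dicksonRec {x : ℕ → MvPolynomial (Fin n) (ZMod p)}
    (hx : ∀ j (hj : j < n), x j = hGen p n ⟨j, hj⟩) :
    ∀ {k}, k ≤ n → ∀ i, d p n k i = dicksonRec p x k i
  | 0, _, 0 => d_self (Nat.zero_le n)
  | 0, _, _ + 1 => d_eq_zero_of_lt (Nat.zero_le n) (Nat.succ_pos _)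
  | k + 1, (hk : k < n), 0 => by
    rw [d_succ_zero hk, d_eq_dicksonRec hx hk.le, dicksonRec, hx k hk]
  | k + 1, (hk : k < n), i + 1 => by
    rw [d_succ_succ hk, d_eq_dicksonRec hx hk.le, d_eq_dicksonRec hx hk.le, dicksonRec, hx k hk]

end DicksonInvariants

section AlgebraicIndependence

variable {p n : ℕ} [Fact p.Prime]

theorem colex_degree_lt_of_mem_V {j : Fin n} {u : MvPolynomial (Fin n) (ZMod p)}
    (hu : u ∈ V p n j) : colex.degree u ≺[colex] Finsupp.single j 1 := by
  obtain ⟨c, rfl⟩ := mem_V.1 hu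
  have hpos : ⊥ < colex.toSyn (Finsupp.single j 1) := by
    rw [MonomialOrder.bot_eq_zero, MonomialOrder.toSyn_lt_iff_ne_zero]
    simp
  refine MonomialOrder.degree_sum_le.trans_lt ((Finset.sup_lt_iff hpos).2 fun i hi => ?_)
  rw [C_mul_X_eq_monomial]
  refine (MonomialOrder.degree_monomial_le _).trans_lt ?_
  exact Finsupp.Colex.single_lt_iff.2 (by simpa using hi)

theorem colex_monic_and_degree_hGen (j : Fin n) :
    colex.Monic (hGen p n j) ∧
      colex.degree (hGen p n j) = Finsupp.single j ((p - 1) * p ^ j.val) := by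
  have hfac : ∀ u ∈ V p n j, colex.Monic (X j - u) ∧
      colex.degree (X j - u) = Finsupp.single j 1 := fun u hu => by
    have hlt : colex.degree u ≺[colex] colex.degree (X (R := ZMod p) j) := by
      rw [MonomialOrder.degree_X]; exact colex_degree_lt_of_mem_V hu
    exact ⟨(MonomialOrder.leadingCoeff_sub_of_lt hlt).trans MonomialOrder.monic_X,
      (MonomialOrder.degree_sub_of_lt hlt).trans MonomialOrder.degree_X⟩
  have hmon := MonomialOrder.Monic.prod fun u hu => (hfac u hu).1
  rw [hGen, eval_f]
  refine ⟨hmon.pow, ?_⟩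
  rw [hmon.degree_pow, MonomialOrder.degree_prod_of_monic fun u hu => (hfac u hu).1,
    Finset.sum_congr rfl fun u hu => (hfac u hu).2, Finset.sum_const, card_V j.isLt.le,
    Finsupp.smul_single, Finsupp.smul_single, smul_eq_mul, smul_eq_mul, mul_one]

theorem aeval_hGen_injective : Function.Injective (aeval (R := ZMod p) (hGen p n)) := by
  have hp : p.Prime := Fact.out
  refine colex.injective_aeval_of_monic (fun j => (colex_monic_and_degree_hGen j).1) ?_
  rw [show (fun j => colex.degree (hGen p n j)) = _ from
    funext fun j => (colex_monic_and_degree_hGen j).2]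
  exact Finsupp.weight_single_injective fun j =>
    mul_ne_zero (Nat.sub_ne_zero_of_lt hp.one_lt) (pow_ne_zero _ hp.ne_zero)

end AlgebraicIndependence

/-- writing `∏ d_{n,i}^{m_i}` in the `h`'s, the monomial with exponent vector
`(m_0, m_0+m_1, …, m_0+⋯+m_{n-1})` occurs with coefficient `1`. -/
theorem stmt13 (p n : ℕ) [Fact p.Prime] (m : Fin n → ℕ)
    (P : MvPolynomial (Fin n) (ZMod p))
    (hP : aeval (hGen p n) P = ∏ i : Fin n, (d p n n i.val) ^ (m i)) :
    MvPolynomial.coeff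
      (Finsupp.equivFunOnFinite.symm (fun j : Fin n => ∑ i ∈ Finset.Iic j, m i)) P = 1 := by
  set D : ℕ → MvPolynomial (Fin n) (ZMod p) := dicksonRec p (varOrZero n) n
  have hd : ∀ i, d p n n i = aeval (hGen p n) (D i) := fun i => by
    rw [map_dicksonRec]
    exact d_eq_dicksonRec (fun j hj => by simp [varOrZero, hj]) le_rfl i
  have hPD : P = ∏ i : Fin n, D i ^ m i :=
    aeval_hGen_injective (by simp only [hP, hd, map_prod, map_pow])
  have hD : ∀ i : Fin n, colex.Monic (D i) ∧
      colex.degree (D i) = dicksonExponent n n i :=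
    fun i => colex_monic_and_degree_dicksonRec n (Fact.out : p.Prime).ne_zero le_rfl i.isLt.le
  have hdeg : colex.degree (∏ i : Fin n, D i ^ m i) =
      ∑ i : Fin n, m i • dicksonExponent n n i := by
    rw [MonomialOrder.degree_prod_of_monic fun i _ => (hD i).1.pow]
    exact Finset.sum_congr rfl fun i _ => by rw [(hD i).1.degree_pow, (hD i).2]
  rw [hPD, ← sum_smul_dicksonExponent, ← hdeg]
  exact (MonomialOrder.Monic.prod fun i _ => (hD i).1.pow).coeff_degree
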